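/- arXiv:1004.1810 — 7 statements merged into one kernel-verified Lean document; each statement's English description precedes it below -/
import Mathlib

section
/- For any field K, the centralizer of PSL(2, K) in PΓL(2, K) = PGL(2, K) ⋊ Aut(K) is trivial; in particular, any group G with PSL(2, K) ≤ G ≤ PΓL(2, K) is centerless. -/
/-!
Write `g ∈ PΓL(2, K)` as `(A, σ)` with `A ∈ GL(2, K)`. If `g` centralizes `PSL(2, K)`, then for
every `S ∈ SL(2, K)` the matrices `A · σ(S)` and `S · A` agree up to a scalar. Testing this on the
transvections `1 + E₀₁` and `1 + E₁₀` makes `A` diagonal, and on `1 + t E₀₁` it gives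
`A₀₀ σ(t) = t A₁₁` for all `t`; at `t = 1` the diagonal entries agree, hence `σ = id` and `A` is
scalar. The center of a subgroup containing `PSL(2, K)` lies in the centralizer of `PSL(2, K)`.
-/

open Matrix

variable (K : Type*) [Field K]

/-- `GL(2, K)`. -/
abbrev GL2 := Matrix.GeneralLinearGroup (Fin 2) K

/-- `PGL(2, K) = GL(2, K)/Z(GL(2, K))`. -/
abbrev PGL2 := GL2 K ⧸ Subgroup.center (GL2 K)

/-- An isomorphism of groups maps the center onto the center. -/
theorem mapCenterEq {G H : Type*} [Group G] [Group H] (e : G ≃* H) :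
    (Subgroup.center G).map e.toMonoidHom = Subgroup.center H := by
  ext x
  constructor
  · rintro ⟨y, hy, rfl⟩
    rw [SetLike.mem_coe, Subgroup.mem_center_iff] at hy
    rw [Subgroup.mem_center_iff]
    intro h
    simpa using congrArg e (hy (e.symm h))
  · intro hx
    rw [Subgroup.mem_center_iff] at hx
    refine ⟨e.symm x, ?_, e.apply_symm_apply x⟩
    rw [SetLike.mem_coe, Subgroup.mem_center_iff]
    intro g
    simpa using congrArg e.symm (hx (e g))

/-- The action of a field automorphism on `GL(2, K)`, entrywise. -/
def glMapEquiv (σ : K ≃+* K) : GL2 K ≃* GL2 K :=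
  Units.mapEquiv (RingEquiv.mapMatrix σ).toMulEquiv

/-- The induced action of a field automorphism on `PGL(2, K)`. -/
def pglAut (σ : K ≃+* K) : PGL2 K ≃* PGL2 K :=
  QuotientGroup.congr _ _ (glMapEquiv K σ) (mapCenterEq _)

/-- The homomorphism `Aut(K) → Aut(PGL(2, K))`. -/
def pglAutHom : RingAut K →* MulAut (PGL2 K) where
  toFun σ := pglAut K σ
  map_one' := by
    ext x
    refine QuotientGroup.induction_on x ?_
    intro g
    rfl
  map_mul' σ τ := by
    ext x
    refine QuotientGroup.induction_on x ?_
    intro g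
    rfl

/-- `PΓL(2, K) = PGL(2, K) ⋊ Aut(K)`. -/
abbrev PGammaL := SemidirectProduct (PGL2 K) (RingAut K) (pglAutHom K)

/-- The embedding of `PSL(2, K)` (as the image of `SL(2, K)`) into `PΓL(2, K)`. -/
def pslToPGammaL : Matrix.SpecialLinearGroup (Fin 2) K →* PGammaL K :=
  SemidirectProduct.inl.comp
    ((QuotientGroup.mk' (Subgroup.center (GL2 K))).comp
      Matrix.SpecialLinearGroup.toGL)

open scoped MatrixGroups

namespace Matrix

@[simp]
theorem SpecialLinearGroup.coe_transvection {n R : Type*} [Fintype n] [DecidableEq n]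
    [CommRing R] {i j : n} (hij : i ≠ j) (t : R) :
    (SpecialLinearGroup.transvection hij t : Matrix n n R) = Matrix.transvection i j t :=
  rfl

theorem transvection_map {n R S F : Type*} [Fintype n] [DecidableEq n] [CommRing R] [CommRing S]
    [FunLike F R S] [RingHomClass F R S] (f : F) (i j : n) (t : R) :
    (transvection i j t).map f = transvection i j (f t) := by
  ext a b
  simp only [transvection, map_apply, Matrix.add_apply, one_apply, single_apply, map_add]
  split_ifs <;> simp

variable {K : Type*} [Field K] (M : Matrix (Fin 2) (Fin 2) K) {r : K}

theorem entry_one_zero_eq_zero_of_smul_mul_transvection_eq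
    (h : r • (M * transvection 0 1 1) = transvection 0 1 1 * M) : M 1 0 = 0 := by
  have e00 : r * M 0 0 = M 0 0 + M 1 0 := by
    simpa [transvection, mul_apply, single_apply, one_apply] using congr_fun₂ h 0 0
  have e10 : r * M 1 0 = M 1 0 := by
    simpa [transvection, mul_apply, single_apply, one_apply] using congr_fun₂ h 1 0
  rcases eq_or_ne r 1 with rfl | hr
  · linear_combination -e00
  · have : (r - 1) * M 1 0 = 0 := by linear_combination e10
    exact (mul_eq_zero.mp this).resolve_left (sub_ne_zero.mpr hr)

theorem entry_zero_one_eq_zero_of_smul_mul_transvection_eq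
    (h : r • (M * transvection 1 0 1) = transvection 1 0 1 * M) : M 0 1 = 0 := by
  have e01 : r * M 0 1 = M 0 1 := by
    simpa [transvection, mul_apply, single_apply, one_apply] using congr_fun₂ h 0 1
  have e11 : r * M 1 1 = M 0 1 + M 1 1 := by
    simpa [transvection, mul_apply, single_apply, one_apply] using congr_fun₂ h 1 1
  rcases eq_or_ne r 1 with rfl | hr
  · linear_combination -e11
  · have : (r - 1) * M 0 1 = 0 := by linear_combination e01
    exact (mul_eq_zero.mp this).resolve_left (sub_ne_zero.mpr hr)

theorem mul_eq_mul_of_smul_mul_transvection_eq (hc : M 1 0 = 0) (hd : M 1 1 ≠ 0) {s t : K}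
    (h : r • (M * transvection 0 1 s) = transvection 0 1 t * M) : M 0 0 * s = t * M 1 1 := by
  have e01 : r * (M 0 0 * s + M 0 1) = M 0 1 + t * M 1 1 := by
    simpa [transvection, mul_apply, single_apply, one_apply] using congr_fun₂ h 0 1
  have e11 : r * M 1 1 = M 1 1 := by
    simpa [transvection, mul_apply, single_apply, one_apply, hc] using congr_fun₂ h 1 1
  obtain rfl : r = 1 := by
    have : (r - 1) * M 1 1 = 0 := by linear_combination e11
    exact sub_eq_zero.mp ((mul_eq_zero.mp this).resolve_right hd)
  linear_combination e01

end Matrix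

theorem Subgroup.center_eq_bot_of_centralizer_eq_bot {G : Type*} [Group G] {N H : Subgroup G}
    (hN : Subgroup.centralizer (N : Set G) = ⊥) (hNH : N ≤ H) : Subgroup.center H = ⊥ := by
  refine (Subgroup.eq_bot_iff_forall _).mpr fun x hx => Subtype.ext ?_
  have hxN : (x : G) ∈ Subgroup.centralizer (N : Set G) := fun n hn =>
    congrArg Subtype.val (Subgroup.mem_center_iff.mp hx ⟨n, hNH hn⟩)
  rwa [hN, Subgroup.mem_bot] at hxN

section PGammaL

variable {K : Type*} [Field K]

theorem eq_refl_and_mem_range_scalar_of_smul_mul_map_eq (σ : K ≃+* K)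
    {M : Matrix (Fin 2) (Fin 2) K} (hM : M.det ≠ 0)
    (h : ∀ S : SL(2, K), ∃ r : K, r • (M * (S : Matrix (Fin 2) (Fin 2) K).map σ) = S * M) :
    σ = RingEquiv.refl K ∧ M ∈ Set.range (scalar (Fin 2)) := by
  have hupper (t : K) : ∃ r : K, r • (M * transvection 0 1 (σ t)) = transvection 0 1 t * M := by
    simpa [transvection_map] using h (SpecialLinearGroup.transvection zero_ne_one t)
  have hc : M 1 0 = 0 := by
    obtain ⟨r, hr⟩ := hupper 1
    exact entry_one_zero_eq_zero_of_smul_mul_transvection_eq M (by simpa using hr)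
  have hb : M 0 1 = 0 := by
    obtain ⟨r, hr⟩ := h (SpecialLinearGroup.transvection one_ne_zero 1)
    exact entry_zero_one_eq_zero_of_smul_mul_transvection_eq M
      (by simpa [transvection_map] using hr)
  have had : M 0 0 * M 1 1 ≠ 0 := by simpa [det_fin_two, hb] using hM
  have hd : M 1 1 ≠ 0 := right_ne_zero_of_mul had
  have hσ (t : K) : M 0 0 * σ t = t * M 1 1 := by
    obtain ⟨r, hr⟩ := hupper t
    exact mul_eq_mul_of_smul_mul_transvection_eq M hc hd hr
  have hdiag : M 0 0 = M 1 1 := by simpa using hσ 1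
  refine ⟨RingEquiv.ext fun t => mul_left_cancel₀ (left_ne_zero_of_mul had) ?_, M 1 1, ?_⟩
  · rw [hσ, hdiag, mul_comm, RingEquiv.refl_apply]
  · ext i j
    fin_cases i <;> fin_cases j <;> simp [hb, hc, hdiag]

theorem exists_smul_eq_of_mk_eq_mk {A B : GL2 K} (h : (A : PGL2 K) = B) :
    ∃ r : K, r • (A : Matrix (Fin 2) (Fin 2) K) = B := by
  obtain ⟨z, hz, rfl⟩ := (QuotientGroup.mk'_eq_mk' _).mp h
  obtain ⟨r, hr⟩ := GeneralLinearGroup.mem_center_iff_val_mem_range_scalar.mp hz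
  refine ⟨r, ?_⟩
  rw [Units.val_mul, ← hr, scalar_apply, ← smul_one_eq_diagonal, Matrix.mul_smul, mul_one]

@[simp]
theorem pglAutHom_mk (σ : RingAut K) (A : GL2 K) :
    pglAutHom K σ (A : PGL2 K) = (glMapEquiv K σ A : PGL2 K) :=
  rfl

theorem centralizer_range_pslToPGammaL :
    Subgroup.centralizer ((pslToPGammaL K).range : Set (PGammaL K)) = ⊥ := by
  refine (Subgroup.eq_bot_iff_forall _).mpr fun g hg => ?_
  obtain ⟨A, hA⟩ := QuotientGroup.mk_surjective g.left
  have hcomm (S : SL(2, K)) : ∃ r : K, r • ((A : Matrix (Fin 2) (Fin 2) K) *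
      (S : Matrix (Fin 2) (Fin 2) K).map g.right) = S * A := by
    refine exists_smul_eq_of_mk_eq_mk (A := A * glMapEquiv K g.right S.toGL) (B := S.toGL * A) ?_
    have hleft := congrArg SemidirectProduct.left (hg _ ⟨S, rfl⟩)
    simpa [pslToPGammaL, ← hA] using hleft.symm
  obtain ⟨hσ, hscalar⟩ :=
    eq_refl_and_mem_range_scalar_of_smul_mul_map_eq g.right A.det_ne_zero hcomm
  refine SemidirectProduct.ext ?_ hσ
  rw [SemidirectProduct.one_left, ← hA, QuotientGroup.eq_one_iff]
  exact GeneralLinearGroup.mem_center_iff_val_mem_range_scalar.mpr hscalar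

end PGammaL

/-- For any field `K`, the centralizer of `PSL(2, K)` in `PΓL(2, K) = PGL(2, K) ⋊ Aut(K)`
is trivial; in particular, any group `G` with `PSL(2, K) ≤ G ≤ PΓL(2, K)` is centerless. -/
theorem stmt4 :
    (∀ g : PGammaL K,
        (∀ s : Matrix.SpecialLinearGroup (Fin 2) K,
          g * pslToPGammaL K s = pslToPGammaL K s * g) → g = 1) ∧
    ∀ G : Subgroup (PGammaL K), (pslToPGammaL K).range ≤ G →
      Subgroup.center ↥G = ⊥ := by
  refine ⟨fun g hg => ?_, fun G => Subgroup.center_eq_bot_of_centralizer_eq_bot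
    (centralizer_range_pslToPGammaL (K := K))⟩
  have hg' : g ∈ Subgroup.centralizer ((pslToPGammaL K).range : Set (PGammaL K)) := by
    rintro _ ⟨s, rfl⟩
    exact (hg s).symm
  rwa [centralizer_range_pslToPGammaL, Subgroup.mem_bot] at hg'
end

section
/- Let K be a field, H ≤ Aut(K) a subgroup, and G = PGL(2, K) ⋊ H ≤ PΓL(2, K). Then for every ordinal α, N^α_{PΓL(2,K)}(G) = PGL(2, K) ⋊ N^α_{Aut(K)}(H). -/
/-!
Taking preimages under a surjective homomorphism commutes with normalizers and with suprema
of nonempty families (the kernel lies in every preimage). By transfinite induction it therefore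
commutes with every stage of the normalizer tower; apply this to the projection
`PΓL(2, K) → Aut(K)`.
-/

open Matrix

variable (K : Type*) [Field K]

/-- The normalizer tower of a subgroup `H` of `G`: `N⁰ = H`, `N^{α+1} = N_G(N^α)`,
unions at limit ordinals. -/
noncomputable def normalizerTower {G : Type*} [Group G] (H : Subgroup G) (o : Ordinal) :
    Subgroup G :=
  Ordinal.limitRecOn o H (fun _ N => Subgroup.normalizer (N : Set _))
    (fun o _ ih => ⨆ (β : Ordinal) (h : β < o), ih β h)

lemma Subgroup.comap_iSup_of_surjective {G N : Type*} [Group G] [Group N] {f : G →* N}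
    (hf : Function.Surjective f) {ι : Sort*} [Nonempty ι] (S : ι → Subgroup N) :
    (⨆ i, S i).comap f = ⨆ i, (S i).comap f := by
  have map_eq : (⨆ i, (S i).comap f).map f = ⨆ i, S i := by
    rw [Subgroup.map_iSup]
    exact iSup_congr fun i => Subgroup.map_comap_eq_self_of_surjective hf _
  have ker_le : f.ker ≤ ⨆ i, (S i).comap f :=
    (Subgroup.ker_le_comap f _).trans (le_iSup (fun i => (S i).comap f) (Classical.arbitrary ι))
  rw [← map_eq, Subgroup.comap_map_eq, sup_eq_left.2 ker_le]

section normalizerTower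

variable {G : Type*} [Group G] (H : Subgroup G)

lemma normalizerTower_zero : normalizerTower H 0 = H :=
  Ordinal.limitRecOn_zero ..

lemma normalizerTower_add_one (o : Ordinal) :
    normalizerTower H (o + 1) = Subgroup.normalizer (normalizerTower H o : Set G) :=
  Ordinal.limitRecOn_add_one ..

lemma normalizerTower_of_isSuccLimit {o : Ordinal} (ho : Order.IsSuccLimit o) :
    normalizerTower H o = ⨆ (β : Ordinal) (_ : β < o), normalizerTower H β :=
  Ordinal.limitRecOn_limit _ _ _ _ ho

end normalizerTower

theorem normalizerTower_comap_of_surjective {G N : Type*} [Group G] [Group N] {f : G →* N}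
    (hf : Function.Surjective f) (H : Subgroup N) (α : Ordinal) :
    normalizerTower (H.comap f) α = (normalizerTower H α).comap f := by
  induction α using Ordinal.limitRecOn with
  | zero => rw [normalizerTower_zero, normalizerTower_zero]
  | add_one o ih =>
    rw [normalizerTower_add_one, normalizerTower_add_one, ih,
      Subgroup.comap_normalizer_eq_of_surjective _ hf]
  | limit o ho ih =>
    have : Nonempty {β : Ordinal // β < o} := ⟨⟨0, ho.bot_lt⟩⟩
    rw [normalizerTower_of_isSuccLimit _ ho, normalizerTower_of_isSuccLimit _ ho, iSup_subtype',
      iSup_subtype', Subgroup.comap_iSup_of_surjective hf]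
    exact iSup_congr fun β => ih β β.2

/-- Let `K` be a field, `H ≤ Aut(K)`, and `G = PGL(2, K) ⋊ H ≤ PΓL(2, K)`
(realized as the preimage of `H` under the projection `PΓL(2, K) → Aut(K)`).
Then for every ordinal `α`,
`N^α_{PΓL(2,K)}(G) = PGL(2, K) ⋊ N^α_{Aut(K)}(H)`. -/
theorem stmt5 (H : Subgroup (RingAut K)) :
    ∀ α : Ordinal,
      normalizerTower
          (Subgroup.comap (SemidirectProduct.rightHom : PGammaL K →* RingAut K) H) α
        = Subgroup.comap (SemidirectProduct.rightHom : PGammaL K →* RingAut K)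
            (normalizerTower H α) :=
  normalizerTower_comap_of_surjective SemidirectProduct.rightHom_surjective H
end

section
/- For any structure 𝔄 in a relational language L, there exists a structure 𝔅 in a countable language, with universe the disjoint union of the universe of 𝔄 and L equipped with a rigid structure, such that Aut(𝔅) ≅ Aut(𝔄). -/
/-!
An automorphism of `𝔅` must preserve the predicate `P`, so it splits as `σ ⊕ τ` with `σ` a
permutation of `𝔄` and `τ` a permutation of the symbol sort. The relations of `L'`, and the
graphs of its functions, live on the symbol sort, so `τ` is an automorphism of the rigid
structure and hence the identity. The relations `Rₖ` then say exactly that `σ` preserves every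
relation of `L`. Conversely every `σ ∈ Aut(𝔄)` extends by the identity on the symbol sort, and
`σ ↦ σ ⊕ id` is the required isomorphism.
-/

open FirstOrder

universe u v a a'

theorem Equiv.exists_eq_sumCongr {α β α' β' : Type*} (e : α ⊕ β ≃ α' ⊕ β')
    (he : ∀ x, (e x).isRight ↔ x.isRight) :
    ∃ (e₁ : α ≃ α') (e₂ : β ≃ β'), e = Equiv.sumCongr e₁ e₂ := by
  have he' : ∀ x, (e x).isLeft ↔ x.isLeft := by
    simpa only [← Sum.not_isRight, not_iff_not] using he
  refine ⟨sumIsLeft.symm.trans ((e.subtypeEquiv fun x => (he' x).symm).trans sumIsLeft),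
    sumIsRight.symm.trans ((e.subtypeEquiv fun x => (he x).symm).trans sumIsRight), ?_⟩
  ext (a | b) <;> simp

namespace FirstOrder.Language

/-- `isSymbol` is the predicate `P` and `code k` is `Rₖ`; the functions of `L'` are coded by
their graphs, so that `𝔅` is relational. -/
inductive CodingRel (L' : Language.{u, v}) : ℕ → Type max u v
  | ofRel {n : ℕ} : L'.Relations n → CodingRel L' n
  | graph {n : ℕ} : L'.Functions n → CodingRel L' (n + 1)
  | isSymbol : CodingRel L' 1
  | code (k : ℕ) : CodingRel L' (k + 1)

namespace CodingRel

variable {L' : Language}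

def encode :
    (Σ n, CodingRel L' n) → (Σ n, L'.Relations n) ⊕ (Σ n, L'.Functions n) ⊕ Option ℕ
  | ⟨_, ofRel r⟩ => .inl ⟨_, r⟩
  | ⟨_, graph f⟩ => .inr (.inl ⟨_, f⟩)
  | ⟨_, isSymbol⟩ => .inr (.inr none)
  | ⟨_, code k⟩ => .inr (.inr (some k))

theorem encode_injective : Function.Injective (encode (L' := L')) := by
  rintro ⟨_, r | f | _ | k⟩ ⟨_, r' | f' | _ | k'⟩ h <;>
    simp only [encode, Sum.inl.injEq, Sum.inr.injEq, reduceCtorEq, Option.some.injEq,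
      Sigma.mk.injEq] at h
  · obtain ⟨rfl, ⟨⟩⟩ := h; rfl
  · obtain ⟨rfl, ⟨⟩⟩ := h; rfl
  · rfl
  · rw [h]

instance [Countable L'.Symbols] (n : ℕ) : Countable (CodingRel L' n) :=
  have : Countable (Σ n, L'.Relations n) :=
    (Sum.inr_injective (α := Σ n, L'.Functions n)).countable
  have : Countable (Σ n, CodingRel L' n) := encode_injective.countable
  sigma_mk_injective.countable

end CodingRel

variable {L : Language} {M : Type*} [L.Structure M] {L' : Language}
  [L'.Structure (Σ n, L.Relations n)]

open Structure

def codingRelMap : ∀ {n}, CodingRel L' n → (Fin n → M ⊕ Σ n, L.Relations n) → Prop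
  | _, .ofRel r, x => ∃ y, x = Sum.inr ∘ y ∧ RelMap r y
  | _, .graph f, x => ∃ y, x = Sum.inr ∘ y ∧ funMap f (Fin.init y) = y (Fin.last _)
  | _, .isSymbol, x => (x 0).isRight
  | _, .code k, x => ∃ (R : L.Relations k) (m : Fin k → M),
      x = Fin.snoc (Sum.inl ∘ m) (Sum.inr ⟨k, R⟩) ∧ RelMap R m

theorem codingRelMap_ofRel_inr {n : ℕ} (r : L'.Relations n) (y : Fin n → Σ n, L.Relations n) :
    codingRelMap (M := M) (.ofRel r) (Sum.inr ∘ y) ↔ RelMap r y := by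
  simp [codingRelMap, Sum.inr_injective.comp_left.eq_iff]

theorem codingRelMap_graph_inr {n : ℕ} (f : L'.Functions n)
    (y : Fin (n + 1) → Σ n, L.Relations n) :
    codingRelMap (M := M) (.graph f) (Sum.inr ∘ y) ↔
      funMap f (Fin.init y) = y (Fin.last n) := by
  simp [codingRelMap, Sum.inr_injective.comp_left.eq_iff]

theorem codingRelMap_code_snoc {k : ℕ} (R : L.Relations k) (m : Fin k → M) :
    codingRelMap (L' := L') (.code k) (Fin.snoc (Sum.inl ∘ m) (Sum.inr ⟨k, R⟩)) ↔
      RelMap R m := by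
  simp [codingRelMap, Fin.snoc_injective2.eq_iff, Sum.inl_injective.comp_left.eq_iff]

theorem codingRelMap_sumCongr (σ : M ≃[L] M) {n : ℕ} (r : CodingRel L' n)
    (x : Fin n → M ⊕ Σ n, L.Relations n) :
    codingRelMap r (_root_.Equiv.sumCongr σ.toEquiv (_root_.Equiv.refl _) ∘ x) ↔
      codingRelMap r x := by
  set e := _root_.Equiv.sumCongr σ.toEquiv (_root_.Equiv.refl (Σ n, L.Relations n))
  have fixes_inr {n : ℕ} (y : Fin n → Σ n, L.Relations n) :
      e.symm ∘ (Sum.inr ∘ y) = Sum.inr ∘ y :=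
    rfl
  cases r with
  | ofRel r => simp only [codingRelMap, ← _root_.Equiv.eq_symm_comp, fixes_inr]
  | graph f => simp only [codingRelMap, ← _root_.Equiv.eq_symm_comp, fixes_inr]
  | isSymbol => simp only [codingRelMap, Function.comp_apply]; cases x 0 <;> rfl
  | code k =>
    simp only [codingRelMap, ← _root_.Equiv.eq_symm_comp, Fin.comp_snoc]
    refine exists_congr fun R => ⟨?_, ?_⟩
    · rintro ⟨m, hx, hm⟩
      exact ⟨σ.symm ∘ m, hx, (σ.symm.map_rel R m).2 hm⟩
    · rintro ⟨m, rfl, hm⟩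
      refine ⟨σ ∘ m, ?_, (σ.map_rel R m).2 hm⟩
      congr 1
      funext i
      exact congrArg Sum.inl (σ.toEquiv.symm_apply_apply (m i)).symm

variable [Countable L'.Symbols]

variable (L') in
/-- The statement quantifies over languages in arbitrary universes; the countably many symbols
can be shrunk into any universe. -/
def codingLang : Language.{a, a'} where
  Functions _ := PEmpty
  Relations n := @Shrink.{a'} (CodingRel L' n) (Countable.toSmall _)

variable (L') in
noncomputable def codingRelEquiv (n : ℕ) :
    CodingRel L' n ≃ (codingLang.{a, a'} L').Relations n :=
  @equivShrink _ (Countable.toSmall _)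

instance : Countable (codingLang.{a, a'} L').Symbols := by
  have (n : ℕ) : Countable ((codingLang.{a, a'} L').Functions n) :=
    inferInstanceAs (Countable PEmpty)
  have (n : ℕ) : Countable ((codingLang.{a, a'} L').Relations n) :=
    Countable.of_equiv _ (codingRelEquiv.{a, a'} L' n)
  unfold Symbols; infer_instance

instance : IsRelational (codingLang.{a, a'} L') :=
  fun _ => inferInstanceAs (IsEmpty PEmpty.{a + 1})

noncomputable instance : (codingLang.{a, a'} L').Structure (M ⊕ Σ n, L.Relations n) where
  RelMap r x := codingRelMap ((codingRelEquiv L' _).symm r) x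

theorem relMap_codingRelEquiv {n : ℕ} (r : CodingRel L' n)
    (x : Fin n → M ⊕ Σ n, L.Relations n) :
    RelMap (codingRelEquiv.{a, a'} L' n r) x ↔ codingRelMap r x := by
  change codingRelMap ((codingRelEquiv L' n).symm (codingRelEquiv L' n r)) x ↔ _
  rw [_root_.Equiv.symm_apply_apply]

theorem codingRelMap_comp_equiv
    (Φ : (M ⊕ Σ n, L.Relations n) ≃[codingLang.{a, a'} L'] (M ⊕ Σ n, L.Relations n))
    {n : ℕ} (r : CodingRel L' n) (x : Fin n → M ⊕ Σ n, L.Relations n) :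
    codingRelMap r (Φ ∘ x) ↔ codingRelMap r x := by
  simpa only [relMap_codingRelEquiv] using Φ.map_rel (codingRelEquiv.{a, a'} L' n r) x

variable (L') in
noncomputable def equivOfCodingRelMap
    (e : (M ⊕ Σ n, L.Relations n) ≃ (M ⊕ Σ n, L.Relations n))
    (he : ∀ {n} (r : CodingRel L' n) x, codingRelMap r (e ∘ x) ↔ codingRelMap r x) :
    (M ⊕ Σ n, L.Relations n) ≃[codingLang.{a, a'} L'] (M ⊕ Σ n, L.Relations n) where
  toEquiv := e
  map_fun' f := isEmptyElim f
  map_rel' _ x := he _ x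

variable (L') in
noncomputable def liftAut (σ : M ≃[L] M) :
    (M ⊕ Σ n, L.Relations n) ≃[codingLang.{a, a'} L'] (M ⊕ Σ n, L.Relations n) :=
  equivOfCodingRelMap L' (_root_.Equiv.sumCongr σ.toEquiv (_root_.Equiv.refl _))
    (codingRelMap_sumCongr σ)

theorem liftAut_comp (σ τ : M ≃[L] M) :
    liftAut.{a, a'} L' (σ.comp τ) = (liftAut L' σ).comp (liftAut L' τ) := by
  ext (m | s) <;> rfl

theorem liftAut_injective : Function.Injective (liftAut.{a, a'} (L := L) (M := M) L') := by
  intro σ τ h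
  ext m
  exact Sum.inl_injective (DFunLike.congr_fun h (Sum.inl m))

theorem exists_coe_eq_sumMap
    (Φ : (M ⊕ Σ n, L.Relations n) ≃[codingLang.{a, a'} L'] (M ⊕ Σ n, L.Relations n)) :
    ∃ (σ : M ≃ M) (τ : (Σ n, L.Relations n) ≃ (Σ n, L.Relations n)),
      ⇑Φ = Sum.map σ τ := by
  obtain ⟨σ, τ, h⟩ := Φ.toEquiv.exists_eq_sumCongr fun v =>
    codingRelMap_comp_equiv Φ .isSymbol fun _ => v
  exact ⟨σ, τ, congrArg DFunLike.coe h⟩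

section Restrict

variable (Φ : (M ⊕ Σ n, L.Relations n) ≃[codingLang.{a, a'} L'] (M ⊕ Σ n, L.Relations n))
  {σ : M ≃ M} {τ : (Σ n, L.Relations n) ≃ (Σ n, L.Relations n)}

theorem comp_inr_of_coe_eq_sumMap (h : ⇑Φ = Sum.map σ τ) {n : ℕ}
    (y : Fin n → Σ n, L.Relations n) :
    ⇑Φ ∘ (Sum.inr ∘ y) = Sum.inr ∘ (τ ∘ y) := by
  rw [h]; rfl

def symbolsEquivOfCoeEq (h : ⇑Φ = Sum.map σ τ) :
    (Σ n, L.Relations n) ≃[L'] (Σ n, L.Relations n) where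
  toEquiv := τ
  map_fun' f z := by
    have hgraph := codingRelMap_comp_equiv Φ (.graph f) (Sum.inr ∘ Fin.snoc z (funMap f z))
    rw [comp_inr_of_coe_eq_sumMap Φ h, codingRelMap_graph_inr, codingRelMap_graph_inr,
      Fin.comp_snoc, Fin.init_snoc, Fin.snoc_last, Fin.init_snoc, Fin.snoc_last] at hgraph
    exact (hgraph.2 rfl).symm
  map_rel' r y := by
    simpa only [_root_.Equiv.toFun_as_coe, comp_inr_of_coe_eq_sumMap Φ h,
      codingRelMap_ofRel_inr] using codingRelMap_comp_equiv Φ (.ofRel r) (Sum.inr ∘ y)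

def pointsEquivOfCoeEq [L.IsRelational] (h : ⇑Φ = Sum.map σ id) : M ≃[L] M where
  toEquiv := σ
  map_fun' f := isEmptyElim f
  map_rel' R m := by
    have hcode :=
      codingRelMap_comp_equiv Φ (.code _) (Fin.snoc (Sum.inl ∘ m) (Sum.inr ⟨_, R⟩))
    rw [h, Fin.comp_snoc] at hcode
    change codingRelMap _ (Fin.snoc (Sum.inl ∘ (σ ∘ m)) (Sum.inr ⟨_, R⟩)) ↔ _ at hcode
    rwa [codingRelMap_code_snoc, codingRelMap_code_snoc] at hcode

end Restrict

theorem liftAut_surjective [L.IsRelational]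
    (hrigid : ∀ f : (Σ n, L.Relations n) ≃[L'] (Σ n, L.Relations n), f = Equiv.refl L' _) :
    Function.Surjective (liftAut.{a, a'} (L := L) (M := M) L') := by
  intro Φ
  obtain ⟨σ, τ, h⟩ := exists_coe_eq_sumMap Φ
  obtain rfl : τ = _root_.Equiv.refl _ :=
    congrArg Language.Equiv.toEquiv (hrigid (symbolsEquivOfCoeEq Φ h))
  refine ⟨pointsEquivOfCoeEq Φ h, ?_⟩
  ext v
  rw [h]
  cases v <;> rfl

end FirstOrder.Language

/-- For any structure `𝔄` (universe `M`) in a relational language `L`, where the set of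
symbols of `L` carries a rigid structure in a countable vocabulary `L'`, there exists a
structure `𝔅` in a countable language whose universe is the disjoint union of `M` and the
set of symbols of `L`, such that `Aut(𝔅) ≅ Aut(𝔄)` (as groups under composition). -/
theorem stmt6 {L : FirstOrder.Language} [L.IsRelational] (M : Type*) [L.Structure M]
    (L' : FirstOrder.Language) [Countable L'.Symbols]
    [L'.Structure (Σ n, L.Relations n)]
    (hrigid : ∀ f : (Σ n, L.Relations n) ≃[L'] (Σ n, L.Relations n),
      f = FirstOrder.Language.Equiv.refl L' _) :
    ∃ L'' : FirstOrder.Language, Countable L''.Symbols ∧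
      ∃ str : L''.Structure (M ⊕ Σ n, L.Relations n),
        ∃ e : (@FirstOrder.Language.Equiv L'' (M ⊕ Σ n, L.Relations n)
                (M ⊕ Σ n, L.Relations n) str str) ≃ (M ≃[L] M),
          ∀ f g, e (@FirstOrder.Language.Equiv.comp L''
              (M ⊕ Σ n, L.Relations n) (M ⊕ Σ n, L.Relations n)
              str str (M ⊕ Σ n, L.Relations n) str f g)
            = (e f).comp (e g) := by
  let φ := Equiv.ofBijective _
    ⟨Language.liftAut_injective, Language.liftAut_surjective (M := M) hrigid⟩
  refine ⟨Language.codingLang L', inferInstance, inferInstance, φ.symm, fun f g => ?_⟩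
  obtain ⟨σ, rfl⟩ := φ.surjective f
  obtain ⟨τ, rfl⟩ := φ.surjective g
  rw [Equiv.symm_apply_apply, Equiv.symm_apply_apply, Equiv.symm_apply_eq]
  exact (Language.liftAut_comp σ τ).symm
end

section
/- There is a fixed number N (N = 7 works) such that every connected graph Γ admits a connected graph Γ⁺ with: (1) Aut(Γ⁺) ≅ Aut(Γ); (2) an edge coloring C : E(Γ⁺) → N such that for each color l < N, the subgraph formed by edges of color l is a disjoint union of stars; (3) every automorphism of Γ⁺ preserves the coloring; and (4) |V(Γ)| ≤ |V(Γ⁺)| ≤ |V(Γ)| + 4|E(Γ)|. -/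
/-- A graph is a disjoint union of stars: there is a set `c` of centers such that every
edge joins a center to a non-center, and every non-center vertex has at most one
neighbor. -/
def IsStarForest {V : Type*} (G : SimpleGraph V) : Prop :=
  ∃ c : Set V, (∀ ⦃v w⦄, G.Adj v w → (v ∈ c ↔ w ∉ c)) ∧
    ∀ v, v ∉ c → (G.neighborSet v).Subsingleton

/-- The subgraph of `G` formed by the edges of color `l` under the edge-coloring `C`. -/
def colorSubgraph {V : Type*} (G : SimpleGraph V) {N : ℕ} (C : Sym2 V → Fin N)
    (l : Fin N) : SimpleGraph V where
  Adj v w := G.Adj v w ∧ C s(v, w) = l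
  symm := by
    constructor
    intro v w h
    exact ⟨h.1.symm, by rw [Sym2.eq_swap]; exact h.2⟩
  loopless := by constructor; intro v h; exact G.irrefl h.1


/-!
Replace every edge `xy` of `Γ` by the path `x – p(x,y) – h(xy) – p(y,x) – y` and hang a pendant
tip `t(xy)` on the hub `h(xy)`; this adds four vertices per edge. The role of each vertex can be
read off the graph: tips are the leaves whose neighbour has degree 3, hubs are the neighbours of
tips, ports are the non-tip neighbours of hubs, and the remaining vertices are the original ones.
So an isomorphism of gadget graphs preserves roles and restricts to an isomorphism of the
original graphs; it is determined by this restriction, because the two ports at a hub are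
reverse darts, distinguished by the original vertices they are attached to. Colouring an edge
`0` if it meets an original vertex and `1` otherwise, each colour class is a union of stars
centred at the original vertices and the hubs.
-/

universe u

theorem isStarForest_colorSubgraph {V : Type*} {G : SimpleGraph V} {N : ℕ} {C : Sym2 V → Fin N}
    (c : Set V) (hc : ∀ ⦃v w⦄, G.Adj v w → (v ∈ c ↔ w ∉ c))
    (hC : ∀ v ∉ c, ∀ ⦃u u'⦄, G.Adj v u → G.Adj v u' → C s(v, u) = C s(v, u') → u = u')
    (l : Fin N) : IsStarForest (colorSubgraph G C l) :=
  ⟨c, fun _ _ h ↦ hc h.1, fun v hv _ hu _ hu' ↦ hC v hv hu.1 hu'.1 (hu.2.trans hu'.2.symm)⟩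

namespace SimpleGraph

section General
variable {α β : Type*} {G : SimpleGraph α} {H : SimpleGraph β}

theorem Iso.encard_neighborSet (φ : G ≃g H) (v : α) :
    (H.neighborSet (φ v)).encard = (G.neighborSet v).encard := by
  rw [← φ.image_neighborSet, φ.injective.encard_image]

theorem Dart.snd_eq_fst_of_edge_eq {d₁ d₂ : G.Dart} (h : d₁.edge = d₂.edge) (hne : d₁ ≠ d₂) :
    d₁.snd = d₂.fst := by
  obtain rfl := ((dart_edge_eq_iff d₁ d₂).1 h).resolve_left hne
  rfl

theorem exists_dart_edge_eq (e : G.edgeSet) : ∃ d : G.Dart, d.edge = e := by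
  obtain ⟨e, he⟩ := e
  induction e using Sym2.ind with
  | _ x y => exact ⟨⟨(x, y), he⟩, rfl⟩

open Cardinal in
theorem mk_dart_le (G : SimpleGraph α) : #G.Dart ≤ 2 * #G.edgeSet := by
  choose d hd using exists_dart_edge_eq (G := G)
  have hsurj : Function.Surjective
      fun p : Bool × G.edgeSet ↦ bif p.1 then d p.2 else (d p.2).symm := by
    intro d'
    set e : G.edgeSet := ⟨d'.edge, d'.edge_mem⟩
    rcases (dart_edge_eq_iff d' (d e)).1 (hd e).symm with h | h
    · exact ⟨(true, _), h.symm⟩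
    · exact ⟨(false, _), h.symm⟩
  simpa using mk_le_of_surjective hsurj

end General

inductive GadgetKind
  | base | port | hub | tip
  deriving DecidableEq

section Recognition
variable {α β : Type*} (G : SimpleGraph α) {H : SimpleGraph β}

def IsGadgetTip (v : α) : Prop :=
  (G.neighborSet v).encard = 1 ∧ ∃ w, G.Adj v w ∧ (G.neighborSet w).encard = 3

def IsGadgetHub (v : α) : Prop := ∃ w, G.Adj v w ∧ G.IsGadgetTip w

def IsGadgetPort (v : α) : Prop := ¬ G.IsGadgetTip v ∧ ∃ w, G.Adj v w ∧ G.IsGadgetHub w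

open Classical in
noncomputable def gadgetKindOf (v : α) : GadgetKind :=
  if G.IsGadgetTip v then .tip
  else if G.IsGadgetHub v then .hub
  else if G.IsGadgetPort v then .port
  else .base

variable {G}

theorem Iso.exists_adj_iff (φ : G ≃g H) {P : β → Prop} {v : α} :
    (∃ w, H.Adj (φ v) w ∧ P w) ↔ ∃ w, G.Adj v w ∧ P (φ w) := by
  rw [φ.surjective.exists]
  simp only [φ.map_adj_iff]

theorem Iso.isGadgetTip_iff (φ : G ≃g H) {v : α} : H.IsGadgetTip (φ v) ↔ G.IsGadgetTip v := by
  simp only [IsGadgetTip, φ.exists_adj_iff, φ.encard_neighborSet]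

theorem Iso.isGadgetHub_iff (φ : G ≃g H) {v : α} : H.IsGadgetHub (φ v) ↔ G.IsGadgetHub v := by
  simp only [IsGadgetHub, φ.exists_adj_iff, φ.isGadgetTip_iff]

theorem Iso.isGadgetPort_iff (φ : G ≃g H) {v : α} : H.IsGadgetPort (φ v) ↔ G.IsGadgetPort v := by
  simp only [IsGadgetPort, φ.exists_adj_iff, φ.isGadgetTip_iff, φ.isGadgetHub_iff]

theorem Iso.gadgetKindOf_apply (φ : G ≃g H) (v : α) : H.gadgetKindOf (φ v) = G.gadgetKindOf v := by
  classical
  simp only [gadgetKindOf, φ.isGadgetTip_iff, φ.isGadgetHub_iff, φ.isGadgetPort_iff]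

end Recognition

inductive GadgetVert {V : Type u} (Γ : SimpleGraph V) : Type u
  | base (x : V)
  | port (d : Γ.Dart)
  | hub (e : Γ.edgeSet)
  | tip (e : Γ.edgeSet)

namespace GadgetVert
variable {V : Type u} {Γ : SimpleGraph V}

def Link : GadgetVert Γ → GadgetVert Γ → Prop
  | base x, port d => d.fst = x
  | port d, hub e => d.edge = e
  | hub e, tip e' => e = e'
  | _, _ => False

def kind : GadgetVert Γ → GadgetKind
  | base _ => .base
  | port _ => .port
  | hub _ => .hub
  | tip _ => .tip

end GadgetVert

open GadgetVert

def gadget {V : Type u} (Γ : SimpleGraph V) : SimpleGraph (GadgetVert Γ) where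
  Adj v w := v.Link w ∨ w.Link v
  symm := ⟨fun _ _ ↦ Or.symm⟩
  loopless := ⟨fun v h ↦ by cases v <;> simp [Link] at h⟩

section Gadget
variable {V : Type u} {Γ : SimpleGraph V}

@[simp] theorem gadget_adj {v w : GadgetVert Γ} : Γ.gadget.Adj v w ↔ v.Link w ∨ w.Link v := Iff.rfl

theorem gadget_adj_base {x : V} {w : GadgetVert Γ} :
    Γ.gadget.Adj (base x) w ↔ ∃ d : Γ.Dart, d.fst = x ∧ w = port d := by
  cases w <;> simp [Link]

theorem gadget_neighborSet_port (d : Γ.Dart) :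
    Γ.gadget.neighborSet (port d) = {base d.fst, hub ⟨d.edge, d.edge_mem⟩} := by
  ext w
  cases w <;> simp [Link, Subtype.ext_iff, eq_comm]

theorem gadget_neighborSet_hub {e : Γ.edgeSet} {d : Γ.Dart} (hd : d.edge = e) :
    Γ.gadget.neighborSet (hub e) = {port d, port d.symm, tip e} := by
  ext w
  cases w with
  | port d' => simp [Link, ← hd, dart_edge_eq_iff]
  | _ => simp [Link, eq_comm]

theorem gadget_neighborSet_tip (e : Γ.edgeSet) : Γ.gadget.neighborSet (tip e) = {hub e} := by
  ext w
  cases w <;> simp [Link, eq_comm]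

theorem encard_neighborSet_port (d : Γ.Dart) : (Γ.gadget.neighborSet (port d)).encard = 2 := by
  rw [gadget_neighborSet_port, Set.encard_pair (by simp)]

theorem encard_neighborSet_hub (e : Γ.edgeSet) : (Γ.gadget.neighborSet (hub e)).encard = 3 := by
  obtain ⟨d, hd⟩ := exists_dart_edge_eq e
  rw [gadget_neighborSet_hub hd, Set.encard_insert_of_notMem (by simp [d.symm_ne.symm]),
    Set.encard_pair (by simp)]
  rfl

theorem encard_neighborSet_tip (e : Γ.edgeSet) : (Γ.gadget.neighborSet (tip e)).encard = 1 := by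
  rw [gadget_neighborSet_tip, Set.encard_singleton]

theorem isGadgetTip_gadget_iff {v : GadgetVert Γ} : Γ.gadget.IsGadgetTip v ↔ v.kind = .tip := by
  cases v with
  | base x =>
    simp only [IsGadgetTip, gadget_adj_base, kind, reduceCtorEq, iff_false, not_and]
    rintro - ⟨_, ⟨d, -, rfl⟩, h⟩
    simp [encard_neighborSet_port] at h
  | port d => simp [IsGadgetTip, encard_neighborSet_port, kind]
  | hub e => simp [IsGadgetTip, encard_neighborSet_hub, kind]
  | tip e =>
    simp only [kind, iff_true]
    exact ⟨encard_neighborSet_tip e, hub e, by simp [Link], encard_neighborSet_hub e⟩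

theorem isGadgetHub_gadget_iff {v : GadgetVert Γ} : Γ.gadget.IsGadgetHub v ↔ v.kind = .hub := by
  simp only [IsGadgetHub, isGadgetTip_gadget_iff]
  constructor
  · rintro ⟨w, hadj, hw⟩
    cases w <;> cases v <;> simp_all [Link, kind]
  · intro hv
    cases v with
    | hub e => exact ⟨tip e, by simp [Link], rfl⟩
    | _ => simp [kind] at hv

theorem isGadgetPort_gadget_iff {v : GadgetVert Γ} : Γ.gadget.IsGadgetPort v ↔ v.kind = .port := by
  simp only [IsGadgetPort, isGadgetHub_gadget_iff, isGadgetTip_gadget_iff]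
  constructor
  · rintro ⟨hv, w, hadj, hw⟩
    cases w <;> cases v <;> simp_all [Link, kind]
  · intro hv
    cases v with
    | port d => exact ⟨by simp [kind], hub ⟨d.edge, d.edge_mem⟩, by simp [Link], rfl⟩
    | _ => simp [kind] at hv

theorem gadgetKindOf_gadget (v : GadgetVert Γ) : Γ.gadget.gadgetKindOf v = v.kind := by
  classical
  simp only [gadgetKindOf, isGadgetTip_gadget_iff, isGadgetHub_gadget_iff, isGadgetPort_gadget_iff]
  cases v <;> simp [kind]

theorem GadgetVert.kind_apply {W : Type*} {Δ : SimpleGraph W} (φ : Γ.gadget ≃g Δ.gadget)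
    (v : GadgetVert Γ) :
    (φ v).kind = v.kind := by
  rw [← gadgetKindOf_gadget, φ.gadgetKindOf_apply, gadgetKindOf_gadget]

theorem GadgetVert.kind_eq_base_iff {v : GadgetVert Γ} : v.kind = .base ↔ ∃ x, v = base x := by
  cases v <;> simp [kind]

theorem GadgetVert.kind_eq_port_iff {v : GadgetVert Γ} : v.kind = .port ↔ ∃ d, v = port d := by
  cases v <;> simp [kind]

theorem GadgetVert.kind_eq_hub_iff {v : GadgetVert Γ} : v.kind = .hub ↔ ∃ e, v = hub e := by
  cases v <;> simp [kind]

theorem GadgetVert.kind_eq_tip_iff {v : GadgetVert Γ} : v.kind = .tip ↔ ∃ e, v = tip e := by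
  cases v <;> simp [kind]

theorem gadget_reachable_base_of_adj {x y : V} (h : Γ.Adj x y) :
    Γ.gadget.Reachable (base x) (base y) := by
  let d : Γ.Dart := ⟨(x, y), h⟩
  have h₁ : Γ.gadget.Adj (base x) (port d) := by simp [Link, d]
  have h₂ : Γ.gadget.Adj (port d) (hub ⟨d.edge, d.edge_mem⟩) := by simp [Link]
  have h₃ : Γ.gadget.Adj (hub ⟨d.edge, d.edge_mem⟩) (port d.symm) := by simp [Link]
  have h₄ : Γ.gadget.Adj (port d.symm) (base y) := by simp [Link, d]
  exact h₁.reachable.trans <| h₂.reachable.trans <| h₃.reachable.trans h₄.reachable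

theorem Reachable.gadget_base {x y : V} (h : Γ.Reachable x y) :
    Γ.gadget.Reachable (base x) (base y) := by
  rw [reachable_iff_reflTransGen] at h ⊢
  exact h.lift' base fun _ _ hab ↦
    (reachable_iff_reflTransGen _ _).1 (gadget_reachable_base_of_adj hab)

theorem gadget_exists_reachable_base (v : GadgetVert Γ) : ∃ x, Γ.gadget.Reachable v (base x) := by
  have hub_reach (e : Γ.edgeSet) : ∃ x, Γ.gadget.Reachable (hub e) (base x) := by
    obtain ⟨d, hd⟩ := exists_dart_edge_eq e
    have h₁ : Γ.gadget.Adj (hub e) (port d) := by simp [Link, hd]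
    have h₂ : Γ.gadget.Adj (port d) (base d.fst) := by simp [Link]
    exact ⟨d.fst, h₁.reachable.trans h₂.reachable⟩
  cases v with
  | base x => exact ⟨x, .rfl⟩
  | port d => exact ⟨d.fst, Adj.reachable (by simp [Link])⟩
  | hub e => exact hub_reach e
  | tip e =>
    obtain ⟨x, hx⟩ := hub_reach e
    exact ⟨x, (Adj.reachable (by simp [Link])).trans hx⟩

theorem Connected.gadget (h : Γ.Connected) : Γ.gadget.Connected := by
  obtain ⟨x₀⟩ := h.nonempty
  refine (connected_iff_exists_forall_reachable _).2 ⟨base x₀, fun v ↦ ?_⟩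
  obtain ⟨x, hx⟩ := gadget_exists_reachable_base v
  exact (h.preconnected x₀ x).gadget_base.trans hx.symm

open Cardinal in
theorem mk_gadgetVert_le : #(GadgetVert Γ) ≤ #V + 4 * #Γ.edgeSet := by
  have hsurj : Function.Surjective
      (Sum.elim base (Sum.elim port (Sum.elim hub tip)) :
        V ⊕ Γ.Dart ⊕ Γ.edgeSet ⊕ Γ.edgeSet → GadgetVert Γ) := by
    rintro (x | d | e | e)
    exacts [⟨.inl x, rfl⟩, ⟨.inr (.inl d), rfl⟩, ⟨.inr (.inr (.inl e)), rfl⟩,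
      ⟨.inr (.inr (.inr e)), rfl⟩]
  calc #(GadgetVert Γ) ≤ #V + (#Γ.Dart + (#Γ.edgeSet + #Γ.edgeSet)) := by
        simpa using mk_le_of_surjective hsurj
    _ ≤ #V + (2 * #Γ.edgeSet + (#Γ.edgeSet + #Γ.edgeSet)) := by gcongr; exact mk_dart_le Γ
    _ = #V + 4 * #Γ.edgeSet := by ring

open Cardinal in
theorem mk_le_mk_gadgetVert : #V ≤ #(GadgetVert Γ) :=
  mk_le_of_injective fun _ _ ↦ base.inj

def gadgetColor : Sym2 (GadgetVert Γ) → Fin 2 :=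
  Sym2.lift ⟨fun v w ↦ if v.kind = .base ∨ w.kind = .base then 0 else 1,
    fun _ _ ↦ by simp only [or_comm]⟩

theorem gadgetColor_apply {W : Type*} {Δ : SimpleGraph W} (φ : Γ.gadget ≃g Δ.gadget)
    (v w : GadgetVert Γ) : gadgetColor s(φ v, φ w) = gadgetColor s(v, w) := by
  simp only [gadgetColor, Sym2.lift_mk, kind_apply φ]

theorem isStarForest_gadgetColor (l : Fin 2) :
    IsStarForest (colorSubgraph Γ.gadget gadgetColor l) := by
  refine isStarForest_colorSubgraph {v | v.kind = .base ∨ v.kind = .hub} (fun v w h ↦ ?_) ?_ l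
  · cases v <;> cases w <;> simp_all [Link, kind]
  · rintro (_ | d | _ | e) hv u u' hu hu' hcol
    · simp [kind] at hv
    · rw [← mem_neighborSet, gadget_neighborSet_port] at hu hu'
      rcases hu with rfl | rfl <;> rcases hu' with rfl | rfl <;> simp_all [gadgetColor, kind]
    · simp [kind] at hv
    · rw [← mem_neighborSet, gadget_neighborSet_tip] at hu hu'
      exact hu.trans hu'.symm

end Gadget

section Functoriality
variable {V W X : Type*} {Γ : SimpleGraph V} {Δ : SimpleGraph W} {Θ : SimpleGraph X}

def GadgetVert.map (f : Γ →g Δ) : GadgetVert Γ → GadgetVert Δ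
  | base x => base (f x)
  | port d => port (f.mapDart d)
  | hub e => hub (f.mapEdgeSet e)
  | tip e => tip (f.mapEdgeSet e)

theorem GadgetVert.map_id (v : GadgetVert Γ) : v.map Hom.id = v := by
  cases v <;> simp [map, Hom.mapEdgeSet, Hom.mapDart]

theorem GadgetVert.map_map (f : Γ →g Δ) (g : Δ →g Θ) (v : GadgetVert Γ) :
    (v.map f).map g = v.map (g.comp f) := by
  cases v <;> simp [map, Hom.mapEdgeSet, Sym2.map_map]; rfl

theorem GadgetVert.map_symm_map (ψ : Γ ≃g Δ) (v : GadgetVert Γ) :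
    (v.map ψ.toHom).map ψ.symm.toHom = v := by
  rw [map_map, ψ.symm_toHom_comp_toHom, map_id]

@[simps]
def Hom.gadget (f : Γ →g Δ) : Γ.gadget →g Δ.gadget where
  toFun := GadgetVert.map f
  map_rel' {v w} h := by
    cases v <;> cases w <;> simp_all [Link, GadgetVert.map] <;> rw [← h] <;> rfl

def Iso.gadget (ψ : Γ ≃g Δ) : Γ.gadget ≃g Δ.gadget where
  toFun := GadgetVert.map ψ.toHom
  invFun := GadgetVert.map ψ.symm.toHom
  left_inv := GadgetVert.map_symm_map ψ
  right_inv := GadgetVert.map_symm_map ψ.symm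
  map_rel_iff' {v w} := by
    change Δ.gadget.Adj (v.map ψ.toHom) (w.map ψ.toHom) ↔ _
    refine ⟨fun h ↦ ?_, (Hom.gadget ψ.toHom).map_adj⟩
    simpa only [Hom.gadget_apply, GadgetVert.map_symm_map] using
      (Hom.gadget ψ.symm.toHom).map_adj h

end Functoriality

section Restriction
variable {V W : Type*} {Γ : SimpleGraph V} {Δ : SimpleGraph W} (φ : Γ.gadget ≃g Δ.gadget)

theorem exists_gadgetIso_apply_base (x : V) : ∃ y, φ (base x) = base y :=
  kind_eq_base_iff.1 (kind_apply φ (base x))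

noncomputable def gadgetBaseMap (x : V) : W := (exists_gadgetIso_apply_base φ x).choose

theorem gadgetIso_apply_base (x : V) : φ (base x) = base (gadgetBaseMap φ x) :=
  (exists_gadgetIso_apply_base φ x).choose_spec

theorem exists_gadgetIso_apply_port (d : Γ.Dart) : ∃ d' : Δ.Dart,
    φ (port d) = port d' ∧ d'.toProd = (gadgetBaseMap φ d.fst, gadgetBaseMap φ d.snd) := by
  obtain ⟨d₁, h₁⟩ := kind_eq_port_iff.1 (kind_apply φ (port d))
  obtain ⟨d₂, h₂⟩ := kind_eq_port_iff.1 (kind_apply φ (port d.symm))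
  obtain ⟨e, he⟩ := kind_eq_hub_iff.1 (kind_apply φ (hub ⟨d.edge, d.edge_mem⟩))
  have fst₁ : d₁.fst = gadgetBaseMap φ d.fst := by
    simpa [h₁, gadgetIso_apply_base, Link] using
      φ.map_adj_iff.2 (show Γ.gadget.Adj (base d.fst) (port d) by simp [Link])
  have fst₂ : d₂.fst = gadgetBaseMap φ d.snd := by
    simpa [h₂, gadgetIso_apply_base, Link] using
      φ.map_adj_iff.2 (show Γ.gadget.Adj (base d.snd) (port d.symm) by simp [Link])
  have edge₁ : d₁.edge = e := by
    simpa [h₁, he, Link] using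
      φ.map_adj_iff.2 (show Γ.gadget.Adj (port d) (hub ⟨d.edge, d.edge_mem⟩) by simp [Link])
  have edge₂ : d₂.edge = e := by
    simpa [h₂, he, Link] using
      φ.map_adj_iff.2 (show Γ.gadget.Adj (port d.symm) (hub ⟨d.edge, d.edge_mem⟩) by simp [Link])
  have hne : d₁ ≠ d₂ := fun h ↦ d.symm_ne (port.inj (φ.injective (by rw [h₁, h₂, h])))
  refine ⟨d₁, h₁, Prod.ext fst₁ ?_⟩
  rw [Dart.snd_eq_fst_of_edge_eq (edge₁.trans edge₂.symm) hne, fst₂]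

theorem gadgetBaseMap_adj {x y : V} (h : Γ.Adj x y) :
    Δ.Adj (gadgetBaseMap φ x) (gadgetBaseMap φ y) := by
  obtain ⟨d', -, hd'⟩ := exists_gadgetIso_apply_port φ ⟨(x, y), h⟩
  simpa [hd'] using d'.adj

theorem gadgetBaseMap_symm_gadgetBaseMap (x : V) :
    gadgetBaseMap φ.symm (gadgetBaseMap φ x) = x := by
  apply base.inj
  rw [← gadgetIso_apply_base, ← gadgetIso_apply_base, RelIso.symm_apply_apply]

noncomputable def Iso.ofGadget : Γ ≃g Δ where
  toFun := gadgetBaseMap φ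
  invFun := gadgetBaseMap φ.symm
  left_inv := gadgetBaseMap_symm_gadgetBaseMap φ
  right_inv := gadgetBaseMap_symm_gadgetBaseMap φ.symm
  map_rel_iff' {x y} := by
    change Δ.Adj (gadgetBaseMap φ x) (gadgetBaseMap φ y) ↔ _
    refine ⟨fun h ↦ ?_, gadgetBaseMap_adj φ⟩
    simpa only [gadgetBaseMap_symm_gadgetBaseMap] using gadgetBaseMap_adj φ.symm h

theorem Iso.ofGadget_apply (x : V) : Iso.ofGadget φ x = gadgetBaseMap φ x := rfl

theorem gadgetIso_apply_port (d : Γ.Dart) :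
    φ (port d) = port ((Iso.ofGadget φ).toHom.mapDart d) := by
  obtain ⟨d', h, hd'⟩ := exists_gadgetIso_apply_port φ d
  rw [h]
  congr
  exact Dart.ext _ _ hd'

theorem gadgetIso_apply_hub (e : Γ.edgeSet) :
    φ (hub e) = hub ((Iso.ofGadget φ).toHom.mapEdgeSet e) := by
  obtain ⟨e', he'⟩ := kind_eq_hub_iff.1 (kind_apply φ (hub e))
  obtain ⟨d, hd⟩ := exists_dart_edge_eq e
  have := φ.map_adj_iff.2 (show Γ.gadget.Adj (port d) (hub e) by simp [Link, hd])
  rw [gadgetIso_apply_port, he'] at this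
  rw [he']
  simp only [gadget_adj, Link, or_false] at this
  congr 1
  apply Subtype.ext
  rw [← this, Hom.mapEdgeSet_coe, ← hd]
  rfl

theorem gadgetIso_apply_tip (e : Γ.edgeSet) :
    φ (tip e) = tip ((Iso.ofGadget φ).toHom.mapEdgeSet e) := by
  obtain ⟨e', he'⟩ := kind_eq_tip_iff.1 (kind_apply φ (tip e))
  have := φ.map_adj_iff.2 (show Γ.gadget.Adj (hub e) (tip e) by simp [Link])
  rw [gadgetIso_apply_hub, he'] at this
  rw [he']
  simpa [Link, eq_comm] using this

theorem Iso.gadget_ofGadget : Iso.gadget (Iso.ofGadget φ) = φ := by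
  ext v
  cases v with
  | base x => exact (gadgetIso_apply_base φ x).symm
  | port d => exact (gadgetIso_apply_port φ d).symm
  | hub e => exact (gadgetIso_apply_hub φ e).symm
  | tip e => exact (gadgetIso_apply_tip φ e).symm

theorem Iso.ofGadget_gadget (ψ : Γ ≃g Δ) : Iso.ofGadget (Iso.gadget ψ) = ψ := by
  ext x
  exact (base.inj (gadgetIso_apply_base (Iso.gadget ψ) x)).symm

theorem Iso.ofGadget_trans {X : Type*} {Θ : SimpleGraph X} (φ' : Δ.gadget ≃g Θ.gadget) :
    Iso.ofGadget (φ.trans φ') = (Iso.ofGadget φ).trans (Iso.ofGadget φ') := by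
  ext x
  apply base.inj
  rw [Iso.ofGadget_apply, ← gadgetIso_apply_base, RelIso.trans_apply, gadgetIso_apply_base,
    gadgetIso_apply_base]
  rfl

noncomputable def gadgetIsoEquiv : (Γ.gadget ≃g Δ.gadget) ≃ (Γ ≃g Δ) where
  toFun := Iso.ofGadget
  invFun := Iso.gadget
  left_inv := Iso.gadget_ofGadget
  right_inv := Iso.ofGadget_gadget

end Restriction

end SimpleGraph

/-- There is a fixed number `N` (`N = 7` works) such that every connected graph `Γ`
admits a connected graph `Γ⁺` with: (1) `Aut(Γ⁺) ≅ Aut(Γ)`; (2) an edge coloring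
`C : E(Γ⁺) → N` such that each color class is a disjoint union of stars; (3) every
automorphism of `Γ⁺` preserves the coloring; and (4)
`|V(Γ)| ≤ |V(Γ⁺)| ≤ |V(Γ)| + 4|E(Γ)|`. -/
theorem stmt8 : ∃ N : ℕ, ∀ (V : Type u) (Γ : SimpleGraph V), Γ.Connected →
    ∃ (W : Type u) (Γ' : SimpleGraph W) (C : Sym2 W → Fin N),
      Γ'.Connected ∧
      (∃ e : (Γ' ≃g Γ') ≃ (Γ ≃g Γ), ∀ f g, e (f.trans g) = (e f).trans (e g)) ∧
      (∀ l, IsStarForest (colorSubgraph Γ' C l)) ∧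
      (∀ (φ : Γ' ≃g Γ') (v w : W), Γ'.Adj v w → C s(φ v, φ w) = C s(v, w)) ∧
      Cardinal.mk V ≤ Cardinal.mk W ∧
      Cardinal.mk W ≤ Cardinal.mk V + 4 * Cardinal.mk Γ.edgeSet :=
  ⟨2, fun _ Γ hΓ ↦ ⟨Γ.GadgetVert, Γ.gadget, SimpleGraph.gadgetColor, hΓ.gadget,
    ⟨SimpleGraph.gadgetIsoEquiv, fun φ φ' ↦ SimpleGraph.Iso.ofGadget_trans φ φ'⟩,
    SimpleGraph.isStarForest_gadgetColor, fun φ v w _ ↦ SimpleGraph.gadgetColor_apply φ v w,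
    SimpleGraph.mk_le_mk_gadgetVert, SimpleGraph.mk_gadgetVert_le⟩⟩
end

section
/- Let n be a positive integer, K a field of characteristic r with r = 0 or r ∤ n, containing a primitive n-th root of unity. Let 0 ≠ a ∈ K and let z be a root of X^n = a. If b ∈ K(z) satisfies b^n ∈ K, then b = c·z^k for some c ∈ K and 0 ≤ k < n. -/
/-!
Let `F = K(z)`. It is the splitting field of the separable polynomial `X^n - a`, hence Galois
over `K`. For `x ∈ Fˣ` with `x^n ∈ K`, the values `σ x / x` are `n`-th roots of unity, which all
lie in `K`; so `σ ↦ σ x / x` is a character of `Gal(F/K)`. The character of `z` is injective,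
hence `Gal(F/K)` is cyclic, say generated by `σ₀`, and `σ₀ z / z` is a primitive `m`-th root of
unity with `m = [F : K] ≤ n`. Thus `σ₀ b / b = (σ₀ z / z)^k` for some `k < m`, so `b / z^k` is
fixed by `σ₀`, hence by all of `Gal(F/K)`, and lies in `K`.
-/

open Polynomial IntermediateField

section Kummer

variable {K F : Type*} [Field K] [Field F] [Algebra K F] {n : ℕ} [NeZero n] {ζ : K}

theorem IsPrimitiveRoot.mem_range_algebraMap_of_pow_eq_one (hζ : IsPrimitiveRoot ζ n) {u : F}
    (hu : u ^ n = 1) : u ∈ (algebraMap K F).range := by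
  obtain ⟨i, -, hi⟩ := (hζ.map_of_injective (algebraMap K F).injective).eq_pow_of_pow_eq_one hu
  exact ⟨ζ ^ i, by rw [map_pow, hi]⟩

theorem IsPrimitiveRoot.isSplittingField_X_pow_sub_C_of_adjoin_eq_top (hζ : IsPrimitiveRoot ζ n)
    {a : K} {g : F} (hg : g ^ n = algebraMap K F a) (hgen : Algebra.adjoin K {g} = ⊤) :
    IsSplittingField K F (X ^ n - C a) where
  splits' := by
    rw [Polynomial.map_sub, Polynomial.map_pow, map_C, map_X]
    exact X_pow_sub_C_splits_of_isPrimitiveRoot (hζ.map_of_injective (algebraMap K F).injective) hg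
  adjoin_rootSet' := by
    rw [eq_top_iff, ← hgen]
    apply Algebra.adjoin_mono
    rw [Set.singleton_subset_iff, mem_rootSet_of_ne (X_pow_sub_C_ne_zero (NeZero.pos n) a)]
    simp [hg]

theorem IsPrimitiveRoot.isGalois_of_adjoin_eq_top (hζ : IsPrimitiveRoot ζ n) {a : K} (ha : a ≠ 0)
    {g : F} (hg : g ^ n = algebraMap K F a) (hgen : Algebra.adjoin K {g} = ⊤) : IsGalois K F :=
  have := hζ.isSplittingField_X_pow_sub_C_of_adjoin_eq_top hg hgen
  IsGalois.of_separable_splitting_field (separable_X_pow_sub_C a hζ.neZero'.out ha)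

theorem IsPrimitiveRoot.apply_div_self_mem_range (hζ : IsPrimitiveRoot ζ n) (σ : Gal(F/K))
    {x : F} (hx : x ^ n ∈ (algebraMap K F).range) : σ x / x ∈ (algebraMap K F).range := by
  rcases eq_or_ne x 0 with rfl | hx0
  · simp
  refine hζ.mem_range_algebraMap_of_pow_eq_one ?_
  obtain ⟨t, ht⟩ := hx
  rw [div_pow, ← map_pow, ← ht, σ.commutes, ht, div_self (pow_ne_zero n hx0)]

def kummerChar (hζ : IsPrimitiveRoot ζ n) {x : F} (hx0 : x ≠ 0)
    (hx : x ^ n ∈ (algebraMap K F).range) : Gal(F/K) →* F where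
  toFun σ := σ x / x
  map_one' := div_self hx0
  map_mul' σ τ := by
    obtain ⟨t, ht⟩ := hζ.apply_div_self_mem_range τ hx
    have hτ : τ x = algebraMap K F t * x := by rw [ht, div_mul_cancel₀ _ hx0]
    change σ (τ x) / x = σ x / x * (τ x / x)
    rw [hτ, map_mul, σ.commutes]
    field_simp

variable (hζ : IsPrimitiveRoot ζ n) {x : F} (hx0 : x ≠ 0) (hx : x ^ n ∈ (algebraMap K F).range)

theorem kummerChar_mul_self (σ : Gal(F/K)) : kummerChar hζ hx0 hx σ * x = σ x :=
  div_mul_cancel₀ _ hx0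

theorem kummerChar_injective (hgen : Algebra.adjoin K {x} = ⊤) :
    Function.Injective (kummerChar hζ hx0 hx) := by
  refine (injective_iff_map_eq_one _).mpr fun σ hσ => ?_
  have hσx : σ x = x := by rw [← kummerChar_mul_self hζ hx0 hx, hσ, one_mul]
  exact AlgEquiv.coe_toAlgHom_injective
    (AlgHom.ext_of_adjoin_eq_top hgen (by simpa using hσx))

theorem IsPrimitiveRoot.exists_eq_algebraMap_mul_pow [FiniteDimensional K F] [IsGalois K F]
    (hζ : IsPrimitiveRoot ζ n) {g : F} (hg0 : g ≠ 0) (hg : g ^ n ∈ (algebraMap K F).range)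
    (hgen : Algebra.adjoin K {g} = ⊤) {b : F} (hb : b ^ n ∈ (algebraMap K F).range) :
    ∃ c : K, ∃ k < Module.finrank K F, b = algebraMap K F c * g ^ k := by
  rcases eq_or_ne b 0 with rfl | hb0
  · exact ⟨0, 0, Module.finrank_pos, by simp⟩
  set χ := kummerChar hζ hg0 hg
  set ψ := kummerChar hζ hb0 hb
  have hχ := kummerChar_injective hζ hg0 hg hgen
  have := isCyclic_of_injective_ringHom χ hχ
  obtain ⟨σ₀, hσ₀⟩ := IsCyclic.exists_generator (α := Gal(F/K))
  have hprim : IsPrimitiveRoot (χ σ₀) (Module.finrank K F) := by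
    rw [← IsGalois.card_aut_eq_finrank, ← orderOf_eq_card_of_forall_mem_zpowers hσ₀,
      ← orderOf_injective χ hχ]
    exact IsPrimitiveRoot.orderOf _
  have : NeZero (Module.finrank K F) := ⟨Module.finrank_pos.ne'⟩
  obtain ⟨k, hk, hψ⟩ := hprim.eq_pow_of_pow_eq_one (ξ := ψ σ₀) (by
    rw [← map_pow, ← IsGalois.card_aut_eq_finrank, pow_card_eq_one', map_one])
  have hfix : σ₀ (b / g ^ k) = b / g ^ k := by
    rw [map_div₀, map_pow, ← kummerChar_mul_self hζ hb0 hb, ← kummerChar_mul_self hζ hg0 hg,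
      ← hψ, mul_pow, mul_div_mul_left _ _ (pow_ne_zero k (hprim.ne_zero (NeZero.ne _)))]
  have hfix_all (σ : Gal(F/K)) : σ (b / g ^ k) = b / g ^ k := by
    have : σ₀ ∈ MulAction.stabilizer Gal(F/K) (b / g ^ k) := hfix
    exact (Subgroup.zpowers_le.mpr this) (hσ₀ σ)
  obtain ⟨c, hc⟩ := (IsGalois.mem_range_algebraMap_iff_fixed _).mpr hfix_all
  exact ⟨c, k, hk, by rw [hc, div_mul_cancel₀ _ (pow_ne_zero k hg0)]⟩

end Kummer

theorem stmt11_general {K L : Type*} [Field K] [Field L] [Algebra K L]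
    (n : ℕ) (hn : 0 < n)
    (ζ : K) (hζ : IsPrimitiveRoot ζ n)
    (a : K) (ha : a ≠ 0) (z : L) (hz : z ^ n = algebraMap K L a)
    (b : L) (hb : b ∈ IntermediateField.adjoin K {z})
    (hbn : b ^ n ∈ (algebraMap K L).range) :
    ∃ (c : K) (k : ℕ), k < n ∧ b = algebraMap K L c * z ^ k := by
  have : NeZero n := ⟨hn.ne'⟩
  have hzint : IsIntegral K z := ⟨X ^ n - C a, monic_X_pow_sub_C a hn.ne', by simp [hz]⟩
  let g := AdjoinSimple.gen K z
  have hg : g ^ n = algebraMap K K⟮z⟯ a := Subtype.ext hz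
  have hg0 : g ≠ 0 := ne_zero_pow hn.ne' (hg ▸ (_root_.map_ne_zero _).mpr ha)
  have hgen : Algebra.adjoin K {g} = ⊤ := (adjoin.powerBasis hzint).adjoin_gen_eq_top
  have := adjoin.finiteDimensional hzint
  have := hζ.isGalois_of_adjoin_eq_top ha hg hgen
  obtain ⟨t, ht⟩ := hbn
  obtain ⟨c, k, hk, hbc⟩ := hζ.exists_eq_algebraMap_mul_pow hg0 ⟨a, hg.symm⟩ hgen
    (b := ⟨b, hb⟩) ⟨t, Subtype.ext ht⟩
  have hdeg : Module.finrank K K⟮z⟯ ≤ n := by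
    rw [adjoin.finrank hzint, ← natDegree_X_pow_sub_C (n := n) (r := a)]
    exact natDegree_le_of_dvd (minpoly.dvd K z (by simp [hz])) (X_pow_sub_C_ne_zero hn a)
  exact ⟨c, k, hk.trans_le hdeg, congrArg Subtype.val hbc⟩

/-- (Kummer) Let `n` be a positive integer and `K` a field whose characteristic is `0` or
prime to `n`, containing a primitive `n`-th root of unity.  Let `0 ≠ a ∈ K` and let `z`
(in an extension `L`) be a root of `X^n = a`.  If `b ∈ K(z)` satisfies `b^n ∈ K`, then
`b = c·z^k` for some `c ∈ K` and `0 ≤ k < n`. -/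
theorem stmt11 {K L : Type*} [Field K] [Field L] [Algebra K L]
    (n : ℕ) (hn : 0 < n) (hchar : ¬ ringChar K ∣ n)
    (ζ : K) (hζ : IsPrimitiveRoot ζ n)
    (a : K) (ha : a ≠ 0) (z : L) (hz : z ^ n = algebraMap K L a)
    (b : L) (hb : b ∈ IntermediateField.adjoin K {z})
    (hbn : b ^ n ∈ (algebraMap K L).range) :
    ∃ (c : K) (k : ℕ), k < n ∧ b = algebraMap K L c * z ^ k :=
  stmt11_general n hn ζ hζ a ha z hz b hb hbn
end

section
/- Let L ⊆ K be fields such that L is relatively algebraically closed in K and K is a finite algebraic extension of a simple transcendental extension L(y). Then for any prime p, every p-high element of K belongs to L. -/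
/-!
Write `x = s₀` with `s_{i+1}^p = s_i`. If `x ∉ L`, then no `s_i` lies in `L`, so every `s_i` is
transcendental over `L`. A transcendental `t` has no `p`-th root in `L(t)` (compare degrees in
`r^p = X s^p`), hence `L(s₀) ⊊ L(s₁) ⊊ ⋯`. By the exchange property `y` is algebraic over each
`L(s_i)`, so `K` is finite over each `L(s_i)`, and `[K : L(s_i)]` would be a strictly decreasing
sequence of natural numbers.
-/

/-- An element `x` of a field `F` is `p`-high if there is a sequence `(x_i)_{i<ω}` with
`x₀ = x` and `x_{i+1}^p = x_i` for all `i`. -/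
def IsHigh {F : Type*} [Field F] (p : ℕ) (x : F) : Prop :=
  ∃ s : ℕ → F, s 0 = x ∧ ∀ i, s (i + 1) ^ p = s i

open Polynomial IntermediateField

section

variable {F E : Type*} [Field F] [Field E] [Algebra F E]

theorem Transcendental.eq_one_of_pow_eq_of_mem_adjoin_simple {t b : E}
    (ht : Transcendental F t) {n : ℕ} (hb : b ∈ F⟮t⟯) (hbn : b ^ n = t) : n = 1 := by
  obtain ⟨r, s, rfl⟩ := (mem_adjoin_simple_iff F b).mp hb
  have hs : Polynomial.aeval t s ≠ 0 := fun h ↦ ht <| by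
    rw [← hbn, h, div_zero]
    exact isAlgebraic_zero.pow n
  have hrs : r ^ n = X * s ^ n := by
    have : Polynomial.aeval t r ^ n = t * Polynomial.aeval t s ^ n := by
      rw [← div_eq_iff (pow_ne_zero _ hs), ← div_pow, hbn]
    exact transcendental_iff_injective.mp ht (by simpa using this)
  have hs0 : s ≠ 0 := by rintro rfl; exact hs (map_zero _)
  have hdeg := congrArg natDegree hrs
  rw [natDegree_pow, natDegree_mul X_ne_zero (pow_ne_zero n hs0), natDegree_X,
    natDegree_pow] at hdeg
  have hn : n ∣ 1 + n * s.natDegree := hdeg ▸ dvd_mul_right n _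
  exact Nat.dvd_one.mp ((Nat.dvd_add_left (dvd_mul_right n _)).mp hn)

theorem Transcendental.adjoin_simple_lt_of_pow_eq {t b : E} (ht : Transcendental F t) {n : ℕ}
    (hn : n ≠ 1) (hbn : b ^ n = t) : F⟮t⟯ < F⟮b⟯ :=
  SetLike.lt_iff_le_and_exists.mpr
    ⟨adjoin_simple_le_iff.mpr (hbn ▸ pow_mem (mem_adjoin_simple_self F b) n),
      b, mem_adjoin_simple_self F b, fun hb ↦ hn (ht.eq_one_of_pow_eq_of_mem_adjoin_simple hb hbn)⟩

theorem IsAlgebraic.adjoin_simple {x y : E} (hx : Transcendental F x)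
    (hy : Transcendental F y) (h : IsAlgebraic F⟮x⟯ y) : IsAlgebraic F⟮y⟯ x :=
  isAlgebraic_adjoin_iff.mpr (.adjoin_singleton hx hy (isAlgebraic_adjoin_iff.mp h))

theorem IntermediateField.finiteDimensional_of_le {A B : IntermediateField F E}
    [FiniteDimensional A E] (h : A ≤ B) : FiniteDimensional B E :=
  let := (inclusion h).toAlgebra
  have : IsScalarTower A B E := .of_algebraMap_eq' rfl
  .of_restrictScalars_finite A B E

theorem Transcendental.finiteDimensional_adjoin_simple {y t : E} (hy : Transcendental F y)
    [FiniteDimensional F⟮y⟯ E] (ht : Transcendental F t) : FiniteDimensional F⟮t⟯ E := by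
  have hyt : IsAlgebraic F⟮t⟯ y := .adjoin_simple hy ht (Algebra.IsAlgebraic.isAlgebraic t)
  have : FiniteDimensional F⟮t⟯ F⟮t⟯⟮y⟯ := adjoin.finiteDimensional hyt.isIntegral
  have : FiniteDimensional F⟮t⟯⟮y⟯ E :=
    finiteDimensional_of_le (B := IntermediateField.restrictScalars F F⟮t⟯⟮y⟯)
      (adjoin_simple_le_iff.mpr (mem_adjoin_simple_self _ y))
  exact .trans F⟮t⟯ F⟮t⟯⟮y⟯ E

end

/-- Let `L ⊆ K` be fields with `L` relatively algebraically closed in `K` and `K` a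
finite algebraic extension of a simple transcendental extension `L(y)`.  Then for any
prime `p`, every `p`-high element of `K` belongs to `L`. -/
theorem stmt13 {K : Type*} [Field K] (L : Subfield K)
    (hrac : ∀ x : K, x ∉ L → Transcendental L x)
    (y : K) (hy : Transcendental L y)
    (hfin : FiniteDimensional (IntermediateField.adjoin L {y}) K)
    (p : ℕ) (hp : p.Prime) (x : K) (hx : IsHigh p x) : x ∈ L := by
  obtain ⟨s, rfl, hs⟩ := hx
  by_contra hs₀
  have hsL : ∀ i, s i ∉ L := by
    intro i
    induction i with
    | zero => exact hs₀
    | succ i ih => exact fun h ↦ ih (hs i ▸ pow_mem h p)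
  have hsT (i : ℕ) : Transcendental L (s i) := hrac _ (hsL i)
  have := hfin
  have (i : ℕ) : FiniteDimensional L⟮s i⟯ K := hy.finiteDimensional_adjoin_simple (hsT i)
  refine not_strictAnti_of_wellFoundedLT (fun i ↦ Module.finrank L⟮s i⟯ K)
    (strictAnti_nat_of_succ_lt fun i ↦ finrank_lt_of_gt ?_)
  exact (hsT i).adjoin_simple_lt_of_pow_eq hp.ne_one (hs i)
end

section
/- Let R be an integral domain with fraction field F, and let α₁, ..., αₙ be elements algebraic over F such that the minimal monic polynomial m₁(X₁) of α₁ over F lies in R[X₁], the minimal monic polynomial m₂(α₁, X₂) of α₂ over F(α₁) lies in R[α₁, X₂], and so on. Then R[α₁, ..., αₙ] ≅ R[X₁, ..., Xₙ]/(m₁, ..., mₙ); in particular the ideal (m₁, ..., mₙ) is prime. -/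
/-!
Induct on `n`, viewing `R[X₀, …, Xₙ]` as `A[Xₙ]` with `A = R[X₀, …, Xₙ₋₁]`. Evaluation at
`α₀, …, αₙ₋₁` maps `A` onto a subring `S ≅ A ⧸ ker` of `K = F(α₀, …, αₙ₋₁)`, and `mₙ` becomes a
lift to `S[X]` of the monic minimal polynomial of `αₙ` over `K`. Division by a monic polynomial
commutes with the injection `S[X] → K[X]`, so a polynomial over `S` vanishing at `αₙ` is divisible
by `mₙ` already in `S[X]`. Hence the kernel on `A[Xₙ]` is generated by the kernel on `A` together
with `mₙ`, and induction gives `(m₀, …, mₙ)`; being the kernel of a map to a field, it is prime.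
-/

open Polynomial

namespace Polynomial

variable {S K L : Type*} [CommRing S] [Field K] [CommRing L] [Algebra K L]

theorem map_dvd_map_iff_of_map_eq_minpoly {φ : S →+* K} (hφ : Function.Injective φ) {x : L}
    {M : S[X]} (hM : M.map φ = minpoly K x) {p : S[X]} : M.map φ ∣ p.map φ ↔ M ∣ p := by
  by_cases hx : IsIntegral K x
  · exact map_dvd_map φ hφ (monic_of_injective hφ (hM ▸ minpoly.monic hx))
  · obtain rfl : M = 0 := map_injective φ hφ (by rw [hM, minpoly.eq_zero hx, Polynomial.map_zero])
    simp only [Polynomial.map_zero, zero_dvd_iff, Polynomial.map_eq_zero_iff hφ]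

theorem ker_eval₂RingHom_eq_span_of_injective {φ : S →+* K} (hφ : Function.Injective φ) {x : L}
    {M : S[X]} (hM : M.map φ = minpoly K x) :
    RingHom.ker (eval₂RingHom ((algebraMap K L).comp φ) x) = Ideal.span {M} := by
  ext p
  rw [RingHom.mem_ker, Ideal.mem_span_singleton, coe_eval₂RingHom, ← eval₂_map, ← aeval_def,
    ← minpoly.dvd_iff, ← hM, map_dvd_map_iff_of_map_eq_minpoly hφ hM]

theorem ker_eval₂RingHom_eq_map_C_sup_span {A : Type*} [CommRing A] (φ : A →+* K) {x : L}
    {M : A[X]} (hM : M.map φ = minpoly K x) :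
    RingHom.ker (eval₂RingHom ((algebraMap K L).comp φ) x) =
      Ideal.map C (RingHom.ker φ) ⊔ Ideal.span {M} := by
  set π := Ideal.Quotient.mk (RingHom.ker φ)
  have hfactor : eval₂RingHom ((algebraMap K L).comp φ) x =
      (eval₂RingHom ((algebraMap K L).comp φ.kerLift) x).comp (mapRingHom π) := by
    ext <;> simp [π]
  have hMπ : (M.map π).map φ.kerLift = minpoly K x := by
    rw [map_map, ← hM]; rfl
  rw [hfactor, ← RingHom.comap_ker, ker_eval₂RingHom_eq_span_of_injective φ.kerLift_injective hMπ,
    ← Set.image_singleton, ← coe_mapRingHom, ← Ideal.map_span,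
    Ideal.comap_map_of_surjective _ (map_surjective _ Ideal.Quotient.mk_surjective),
    ← RingHom.ker_eq_comap_bot, ker_mapRingHom, Ideal.mk_ker, sup_comm]

end Polynomial

namespace MvPolynomial

section FinSuccLastEquiv

variable (R : Type*) [CommSemiring R] (n : ℕ)

noncomputable def finSuccLastEquiv :
    MvPolynomial (Fin (n + 1)) R ≃ₐ[R] Polynomial (MvPolynomial (Fin n) R) :=
  (renameEquiv R finSuccEquivLast).trans (optionEquivLeft R (Fin n))

variable {R n}

@[simp]
theorem finSuccLastEquiv_X_last : finSuccLastEquiv R n (X (Fin.last n)) = Polynomial.X := by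
  simp [finSuccLastEquiv]

@[simp]
theorem finSuccLastEquiv_X_castSucc (i : Fin n) :
    finSuccLastEquiv R n (X i.castSucc) = Polynomial.C (X i) := by
  simp [finSuccLastEquiv]

theorem finSuccLastEquiv_rename_castSucc (p : MvPolynomial (Fin n) R) :
    finSuccLastEquiv R n (rename Fin.castSucc p) = Polynomial.C p := by
  suffices ((finSuccLastEquiv R n).toAlgHom.comp (rename Fin.castSucc)) =
      Polynomial.CAlgHom from AlgHom.congr_fun this p
  ext i
  simp

variable {S : Type*} [CommSemiring S] [Algebra R S]

theorem map_finSuccLastEquiv (α : Fin (n + 1) → S) (p : MvPolynomial (Fin (n + 1)) R) :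
    (finSuccLastEquiv R n p).map (aeval (R := R) (α ∘ Fin.castSucc)).toRingHom =
      aeval (fun j => if j < Fin.last n then Polynomial.C (α j) else Polynomial.X) p := by
  suffices (Polynomial.mapAlgHom (aeval (α ∘ Fin.castSucc))).comp
      (finSuccLastEquiv R n).toAlgHom =
      aeval (fun j => if j < Fin.last n then Polynomial.C (α j) else Polynomial.X) from
    AlgHom.congr_fun this p
  ext i : 1
  induction i using Fin.lastCases with
  | last => simp
  | cast i => simp [Fin.castSucc_lt_last]

theorem aeval_eq_eval₂_finSuccLastEquiv (α : Fin (n + 1) → S) (p : MvPolynomial (Fin (n + 1)) R) :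
    aeval α p =
      (finSuccLastEquiv R n p).eval₂ (aeval (R := R) (α ∘ Fin.castSucc)).toRingHom
        (α (Fin.last n)) := by
  suffices ((Polynomial.aeval (α (Fin.last n))).restrictScalars R).comp
      ((Polynomial.mapAlgHom (aeval (α ∘ Fin.castSucc))).comp (finSuccLastEquiv R n).toAlgHom) =
      aeval α by
    rw [← AlgHom.congr_fun this p, ← Polynomial.eval_map]; rfl
  ext i : 1
  induction i using Fin.lastCases with
  | last => simp
  | cast i => simp

end FinSuccLastEquiv

section MinpolyTower

variable {R Ω F : Type*} [CommRing R] [Field Ω] [Field F] [Algebra F Ω] [Algebra R Ω] {n : ℕ}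

variable (F) in
def IsMinpolyTower (α : Fin n → Ω) (m : Fin n → MvPolynomial (Fin n) R) : Prop :=
  (∀ i, ∀ j ∈ (m i).vars, j ≤ i) ∧
    ∀ i, aeval (fun j => if j < i then Polynomial.C (α j) else Polynomial.X) (m i) =
      (minpoly (IntermediateField.adjoin F (α '' {j | j < i})) (α i)).map (algebraMap _ Ω)

theorem ker_aeval_eq_map_rename_sup_span [Algebra R F] [IsScalarTower R F Ω]
    (α : Fin (n + 1) → Ω) {M : MvPolynomial (Fin (n + 1)) R}
    (hM : aeval (fun j => if j < Fin.last n then Polynomial.C (α j) else Polynomial.X) M =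
      (minpoly (IntermediateField.adjoin F (α '' {j | j < Fin.last n})) (α (Fin.last n))).map
        (algebraMap _ Ω)) :
    RingHom.ker (aeval α) =
      Ideal.map (rename Fin.castSucc) (RingHom.ker (aeval (R := R) (α ∘ Fin.castSucc))) ⊔
        Ideal.span {M} := by
  set K := IntermediateField.adjoin F (α '' {j | j < Fin.last n})
  set e := (finSuccLastEquiv R n).toRingEquiv
  set ψ := (aeval (R := R) (α ∘ Fin.castSucc)).toRingHom
  have hψK : ∀ p, ψ p ∈ K := by
    have hle :
        Algebra.adjoin R (Set.range (α ∘ Fin.castSucc)) ≤ K.toSubalgebra.restrictScalars R :=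
      Algebra.adjoin_le fun _ ⟨j, hj⟩ =>
        IntermediateField.subset_adjoin F _ ⟨j.castSucc, Fin.castSucc_lt_last j, hj⟩
    intro p
    exact hle (Algebra.adjoin_range_eq_range_aeval R (α ∘ Fin.castSucc) ▸ ⟨p, rfl⟩)
  set ψK := ψ.codRestrict K hψK
  have hψ : (algebraMap K Ω).comp ψK = ψ := rfl
  have hMK : (e M).map ψK = minpoly K (α (Fin.last n)) := by
    refine Polynomial.map_injective _ (algebraMap K Ω).injective ?_
    rw [Polynomial.map_map, hψ, ← hM]
    exact map_finSuccLastEquiv α M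
  have hfactor : (aeval α : MvPolynomial (Fin (n + 1)) R →ₐ[R] Ω).toRingHom =
      (eval₂RingHom ((algebraMap K Ω).comp ψK) (α (Fin.last n))).comp e.toRingHom :=
    RingHom.ext (aeval_eq_eval₂_finSuccLastEquiv α)
  have hrename : e.symm.toRingHom.comp Polynomial.C = (rename Fin.castSucc).toRingHom :=
    RingHom.ext fun p => e.symm_apply_eq.2 (finSuccLastEquiv_rename_castSucc p).symm
  calc RingHom.ker (aeval α)
      = RingHom.ker
          ((eval₂RingHom ((algebraMap K Ω).comp ψK) (α (Fin.last n))).comp e.toRingHom) := by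
        rw [← hfactor]; rfl
    _ = Ideal.map e.symm.toRingHom
          (RingHom.ker (eval₂RingHom ((algebraMap K Ω).comp ψK) (α (Fin.last n)))) := by
        rw [← RingHom.comap_ker]; exact (Ideal.map_symm e).symm
    _ = _ := by
        rw [ker_eval₂RingHom_eq_map_C_sup_span ψK hMK, Ideal.map_sup, Ideal.map_map, Ideal.map_span,
          Set.image_singleton, hrename, ← RingHom.ker_comp_of_injective ψK
            (algebraMap K Ω).injective, hψ,
          show e.symm.toRingHom (e M) = M from e.symm_apply_apply M]
        rfl

theorem IsMinpolyTower.exists_rename_castSucc_eq {α : Fin (n + 1) → Ω}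
    {m : Fin (n + 1) → MvPolynomial (Fin (n + 1)) R} (h : IsMinpolyTower F α m) :
    ∃ m' : Fin n → MvPolynomial (Fin n) R, ∀ i, rename Fin.castSucc (m' i) = m i.castSucc := by
  choose m' hm' using fun i : Fin n =>
    exists_rename_eq_of_vars_subset_range (m i.castSucc) _ (Fin.castSucc_injective n)
      fun j hj => Fin.exists_castSucc_eq.2 <| Fin.ne_last_of_lt <|
        (h.1 _ j hj).trans_lt (Fin.castSucc_lt_last i)
  exact ⟨m', hm'⟩

theorem IsMinpolyTower.castSucc {α : Fin (n + 1) → Ω}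
    {m : Fin (n + 1) → MvPolynomial (Fin (n + 1)) R} (h : IsMinpolyTower F α m)
    {m' : Fin n → MvPolynomial (Fin n) R} (hm' : ∀ i, rename Fin.castSucc (m' i) = m i.castSucc) :
    IsMinpolyTower F (α ∘ Fin.castSucc) m' := by
  refine ⟨fun i j hj => ?_, fun i => ?_⟩
  · rw [mem_vars_iff_degreeOf_ne_zero, ← degreeOf_rename_of_injective (Fin.castSucc_injective n),
      hm', ← mem_vars_iff_degreeOf_ne_zero] at hj
    exact Fin.castSucc_le_castSucc_iff.1 (h.1 _ _ hj)
  · have himage : (α ∘ Fin.castSucc) '' {j | j < i} = α '' {j | j < i.castSucc} := by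
      rw [Set.image_comp]
      exact congrArg (α '' ·) (Fin.image_castSucc_Iio i)
    have hpartial :
        (fun j : Fin n => if j < i then Polynomial.C ((α ∘ Fin.castSucc) j) else Polynomial.X) =
        (fun j => if j < i.castSucc then Polynomial.C (α j) else Polynomial.X) ∘ Fin.castSucc := by
      funext j
      simp [Fin.castSucc_lt_castSucc_iff]
    rw [himage, hpartial, ← aeval_rename, hm']
    exact h.2 i.castSucc

theorem IsMinpolyTower.ker_aeval_eq_span [Algebra R F] [IsScalarTower R F Ω]
    (hR : Function.Injective (algebraMap R Ω)) {α : Fin n → Ω}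
    {m : Fin n → MvPolynomial (Fin n) R} (h : IsMinpolyTower F α m) :
    RingHom.ker (aeval α) = Ideal.span (Set.range m) := by
  induction n with
  | zero =>
    have hinj : Function.Injective (aeval (R := R) α) := by
      intro p q hpq
      obtain ⟨a, rfl⟩ := C_surjective (Fin 0) p
      obtain ⟨b, rfl⟩ := C_surjective (Fin 0) q
      rw [aeval_C, aeval_C] at hpq
      rw [hR hpq]
    rw [Set.range_eq_empty, Ideal.span_empty]
    exact (RingHom.injective_iff_ker_eq_bot _).1 hinj
  | succ n ih =>
    obtain ⟨m', hm'⟩ := h.exists_rename_castSucc_eq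
    have hrange : Set.range m = insert (m (Fin.last n)) (Set.range (rename Fin.castSucc ∘ m')) := by
      rw [show rename Fin.castSucc ∘ m' = Fin.init m from _root_.funext hm', ← Fin.range_snoc,
        Fin.snoc_init_self]
    rw [ker_aeval_eq_map_rename_sup_span α (h.2 (Fin.last n)), ih (h.castSucc hm'), Ideal.map_span,
      ← Set.range_comp, hrange, Set.insert_eq, Ideal.span_union, sup_comm]

end MinpolyTower

end MvPolynomial

theorem stmt14_general {R : Type*} [CommRing R] [IsDomain R]
    {Ω : Type*} [Field Ω] [Algebra R Ω] [Algebra (FractionRing R) Ω]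
    [IsScalarTower R (FractionRing R) Ω]
    (n : ℕ) (α : Fin n → Ω)
    (m : Fin n → MvPolynomial (Fin n) R)
    (hvars : ∀ i : Fin n, ∀ j ∈ (m i).vars, j ≤ i)
    (hmin : ∀ i : Fin n,
      MvPolynomial.aeval (fun j => if j < i then Polynomial.C (α j) else Polynomial.X)
          (m i) =
        (minpoly (IntermediateField.adjoin (FractionRing R) (α '' {j | j < i})) (α i)).map
          (algebraMap _ Ω)) :
    RingHom.ker (MvPolynomial.aeval α : MvPolynomial (Fin n) R →ₐ[R] Ω)
        = Ideal.span (Set.range m) ∧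
      (Ideal.span (Set.range m)).IsPrime := by
  have hR : Function.Injective (algebraMap R Ω) := by
    rw [IsScalarTower.algebraMap_eq R (FractionRing R) Ω]
    exact (algebraMap (FractionRing R) Ω).injective.comp (IsFractionRing.injective R _)
  have hker := MvPolynomial.IsMinpolyTower.ker_aeval_eq_span hR ⟨hvars, hmin⟩
  exact ⟨hker, hker ▸ RingHom.ker_isPrime _⟩

/-- Let `R` be an integral domain with fraction field `F`, and `α₁, …, αₙ` elements of a
field extension `Ω` of `F`, each `αᵢ` algebraic over `F(α₁, …, α_{i-1})`, such that the
minimal monic polynomial of `αᵢ` over `F(α₁, …, α_{i-1})` is (the partial evaluation at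
`α₁, …, α_{i-1}` of) a polynomial `mᵢ ∈ R[X₁, …, Xᵢ]`.  Then
`R[α₁, …, αₙ] ≅ R[X₁, …, Xₙ]/(m₁, …, mₙ)`, i.e. the kernel of the evaluation map at
`(α₁, …, αₙ)` is the ideal generated by the `mᵢ`; in particular `(m₁, …, mₙ)` is
prime. -/
theorem stmt14 {R : Type*} [CommRing R] [IsDomain R]
    {Ω : Type*} [Field Ω] [Algebra R Ω] [Algebra (FractionRing R) Ω]
    [IsScalarTower R (FractionRing R) Ω]
    (n : ℕ) (α : Fin n → Ω)
    (halg : ∀ i : Fin n,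
      IsIntegral (IntermediateField.adjoin (FractionRing R) (α '' {j | j < i})) (α i))
    (m : Fin n → MvPolynomial (Fin n) R)
    (hvars : ∀ i : Fin n, ∀ j ∈ (m i).vars, j ≤ i)
    (hmin : ∀ i : Fin n,
      MvPolynomial.aeval (fun j => if j < i then Polynomial.C (α j) else Polynomial.X)
          (m i) =
        (minpoly (IntermediateField.adjoin (FractionRing R) (α '' {j | j < i})) (α i)).map
          (algebraMap _ Ω)) :
    RingHom.ker (MvPolynomial.aeval α : MvPolynomial (Fin n) R →ₐ[R] Ω)
        = Ideal.span (Set.range m) ∧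
      (Ideal.span (Set.range m)).IsPrime :=
  stmt14_general n α m hvars hmin
end
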